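/- Let (Ω, F, P) be a probability space, and let π be a probability measure on Θ with density proportional to g·h where g, h : Θ → (0,∞) are measurable, ∫ g h < ∞, and ∫ g < ∞. Define R*(A) = (∫_A g h)/(∫ g h) and R(A) = (∫_A g r)/(∫ g r) for another positive measurable r with ∫ g r < ∞. If ∫ |h(θ) − c| g(θ) dθ ≤ ε·∫ g r and ∫ |r(θ) − c| g(θ) dθ ≤ ε·∫ g r for some constant c > 0 with ε < c·(∫g)/(2∫ g r), then |R*(A) − R(A)| ≤ 4ε/(c·(∫g)/(∫ g r) − 2ε) for every measurable A. -/
import Mathlib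


open MeasureTheory

/-- Quantitative perturbation lemma underlying Proposition 3: if both `h` and
`r` are within `ε·∫gr` of a constant `c` in the `g`-weighted `L¹` norm, then
the self-normalized set functions they induce are uniformly close. -/
theorem perturbation_of_reweighted_probability
    {Θ : Type*} [MeasurableSpace Θ] (μ : Measure Θ)
    (g h r : Θ → ℝ)
    (hgpos : ∀ θ, 0 < g θ) (hhpos : ∀ θ, 0 < h θ) (hrpos : ∀ θ, 0 < r θ)
    (hgm : Measurable g) (hhm : Measurable h) (hrm : Measurable r)
    (hgInt : Integrable g μ)
    (hghInt : Integrable (fun θ => g θ * h θ) μ)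
    (hgrInt : Integrable (fun θ => g θ * r θ) μ)
    (hgh_pos : 0 < ∫ θ, g θ * h θ ∂μ)
    (hgr_pos : 0 < ∫ θ, g θ * r θ ∂μ)
    (c ε : ℝ) (hc : 0 < c)
    (hhc : ∫ θ, |h θ - c| * g θ ∂μ ≤ ε * ∫ θ, g θ * r θ ∂μ)
    (hrc : ∫ θ, |r θ - c| * g θ ∂μ ≤ ε * ∫ θ, g θ * r θ ∂μ)
    (hε : ε < c * (∫ θ, g θ ∂μ) / (2 * ∫ θ, g θ * r θ ∂μ)) :
    ∀ A : Set Θ, MeasurableSet A →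
      |(∫ θ in A, g θ * h θ ∂μ) / (∫ θ, g θ * h θ ∂μ)
        - (∫ θ in A, g θ * r θ ∂μ) / (∫ θ, g θ * r θ ∂μ)|
      ≤ 4 * ε / (c * (∫ θ, g θ ∂μ) / (∫ θ, g θ * r θ ∂μ) - 2 * ε) := by
  intro A hA
  set G := ∫ θ, g θ ∂μ with hGdef
  set H := ∫ θ, g θ * h θ ∂μ with hHdef
  set R := ∫ θ, g θ * r θ ∂μ with hRdef
  set HA := ∫ θ in A, g θ * h θ ∂μ with hHAdef
  set RA := ∫ θ in A, g θ * r θ ∂μ with hRAdef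
  set GA := ∫ θ in A, g θ ∂μ with hGAdef
  have hε0 : 0 ≤ ε := by
    have h1 : (0:ℝ) ≤ ∫ θ, |h θ - c| * g θ ∂μ :=
      integral_nonneg fun θ => mul_nonneg (abs_nonneg _) (hgpos θ).le
    by_contra hlt
    push_neg at hlt
    nlinarith
  -- integrability of g * (h - c) and g * (r - c)
  have hIh : Integrable (fun θ => g θ * (h θ - c)) μ := by
    have e : (fun θ => g θ * (h θ - c)) = fun θ => g θ * h θ - c * g θ := by
      funext θ; ring
    rw [e]; exact hghInt.sub (hgInt.const_mul c)
  have hIr : Integrable (fun θ => g θ * (r θ - c)) μ := by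
    have e : (fun θ => g θ * (r θ - c)) = fun θ => g θ * r θ - c * g θ := by
      funext θ; ring
    rw [e]; exact hgrInt.sub (hgInt.const_mul c)
  have habs_h : ∫ θ, |g θ * (h θ - c)| ∂μ ≤ ε * R := by
    calc ∫ θ, |g θ * (h θ - c)| ∂μ = ∫ θ, |h θ - c| * g θ ∂μ := by
          congr 1; funext θ
          rw [abs_mul, abs_of_pos (hgpos θ), mul_comm]
      _ ≤ ε * R := hhc
  have habs_r : ∫ θ, |g θ * (r θ - c)| ∂μ ≤ ε * R := by
    calc ∫ θ, |g θ * (r θ - c)| ∂μ = ∫ θ, |r θ - c| * g θ ∂μ := by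
          congr 1; funext θ
          rw [abs_mul, abs_of_pos (hgpos θ), mul_comm]
      _ ≤ ε * R := hrc
  have key_h : ∀ B : Set Θ, |∫ θ in B, g θ * (h θ - c) ∂μ| ≤ ε * R := by
    intro B
    calc |∫ θ in B, g θ * (h θ - c) ∂μ| ≤ ∫ θ in B, |g θ * (h θ - c)| ∂μ := by
          simpa only [Real.norm_eq_abs] using
            norm_integral_le_integral_norm (μ := μ.restrict B) (fun θ => g θ * (h θ - c))
      _ ≤ ∫ θ, |g θ * (h θ - c)| ∂μ :=
          setIntegral_le_integral hIh.abs (Filter.Eventually.of_forall fun θ => abs_nonneg _)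
      _ ≤ ε * R := habs_h
  have key_r : ∀ B : Set Θ, |∫ θ in B, g θ * (r θ - c) ∂μ| ≤ ε * R := by
    intro B
    calc |∫ θ in B, g θ * (r θ - c) ∂μ| ≤ ∫ θ in B, |g θ * (r θ - c)| ∂μ := by
          simpa only [Real.norm_eq_abs] using
            norm_integral_le_integral_norm (μ := μ.restrict B) (fun θ => g θ * (r θ - c))
      _ ≤ ∫ θ, |g θ * (r θ - c)| ∂μ :=
          setIntegral_le_integral hIr.abs (Filter.Eventually.of_forall fun θ => abs_nonneg _)
      _ ≤ ε * R := habs_r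
  -- splitting the integrals
  have split_h : ∀ B : Set Θ,
      ∫ θ in B, g θ * (h θ - c) ∂μ = (∫ θ in B, g θ * h θ ∂μ) - c * ∫ θ in B, g θ ∂μ := by
    intro B
    have e : (fun θ => g θ * (h θ - c)) = fun θ => g θ * h θ - c * g θ := by
      funext θ; ring
    rw [e, integral_sub hghInt.integrableOn (hgInt.const_mul c).integrableOn,
      integral_const_mul]
  have split_r : ∀ B : Set Θ,
      ∫ θ in B, g θ * (r θ - c) ∂μ = (∫ θ in B, g θ * r θ ∂μ) - c * ∫ θ in B, g θ ∂μ := by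
    intro B
    have e : (fun θ => g θ * (r θ - c)) = fun θ => g θ * r θ - c * g θ := by
      funext θ; ring
    rw [e, integral_sub hgrInt.integrableOn (hgInt.const_mul c).integrableOn,
      integral_const_mul]
  have b1 : |HA - c * GA| ≤ ε * R := by
    have := key_h A; rwa [split_h A] at this
  have b2 : |RA - c * GA| ≤ ε * R := by
    have := key_r A; rwa [split_r A] at this
  have b3 : |H - c * G| ≤ ε * R := by
    have := key_h Set.univ
    rw [split_h Set.univ] at this
    simpa [Measure.restrict_univ] using this
  have b4 : |R - c * G| ≤ ε * R := by
    have := key_r Set.univ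
    rw [split_r Set.univ] at this
    simpa [Measure.restrict_univ] using this
  have b5 : 0 ≤ RA :=
    setIntegral_nonneg hA fun θ _ => mul_nonneg (hgpos θ).le (hrpos θ).le
  have b6 : RA ≤ R :=
    setIntegral_le_integral hgrInt
      (Filter.Eventually.of_forall fun θ => mul_nonneg (hgpos θ).le (hrpos θ).le)
  rw [abs_le] at b1 b2 b3 b4
  have hεR : 0 ≤ ε * R := mul_nonneg hε0 hgr_pos.le
  have hHR : 0 < H * R := mul_pos hgh_pos hgr_pos
  -- numerator bound
  have num : |HA * R - H * RA| ≤ 4 * ε * R ^ 2 := by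
    have d1 : |HA - RA| ≤ 2 * (ε * R) := by
      rw [abs_le]; constructor <;> linarith
    have d2 : |R - H| ≤ 2 * (ε * R) := by
      rw [abs_le]; constructor <;> linarith
    calc |HA * R - H * RA| = |R * (HA - RA) + RA * (R - H)| := by
          congr 1; ring
      _ ≤ |R * (HA - RA)| + |RA * (R - H)| := abs_add_le _ _
      _ = R * |HA - RA| + RA * |R - H| := by
          rw [abs_mul, abs_mul, abs_of_pos hgr_pos, abs_of_nonneg b5]
      _ ≤ R * (2 * (ε * R)) + R * (2 * (ε * R)) := by
          have e1 : R * |HA - RA| ≤ R * (2 * (ε * R)) :=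
            mul_le_mul_of_nonneg_left d1 hgr_pos.le
          have e2 : RA * |R - H| ≤ R * (2 * (ε * R)) :=
            mul_le_mul b6 d2 (abs_nonneg _) hgr_pos.le
          linarith
      _ = 4 * ε * R ^ 2 := by ring
  -- denominator facts
  have hD : 0 < c * G / R - 2 * ε := by
    have h2 : c * G / (2 * R) = (c * G / R) / 2 := by
      rw [div_div]; ring_nf
    rw [h2] at hε
    linarith
  have hHge : c * G - 2 * ε * R ≤ H := by linarith [b3.1, hεR]
  have hle : c * G / R - 2 * ε ≤ H / R := by
    have e1 : c * G / R - 2 * ε = (c * G - 2 * ε * R) / R := by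
      field_simp
    rw [e1]
    gcongr
  calc |HA / H - RA / R|
      ≤ 4 * ε * R / H := by
        rw [div_sub_div _ _ hgh_pos.ne' hgr_pos.ne', abs_div, abs_of_pos hHR]
        have e2 : 4 * ε * R / H = 4 * ε * R ^ 2 / (H * R) := by
          field_simp
        rw [e2]
        gcongr
    _ = 4 * ε / (H / R) := by rw [div_div_eq_mul_div]
    _ ≤ 4 * ε / (c * G / R - 2 * ε) :=
        div_le_div_of_nonneg_left (by linarith) hD hle
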